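/- arXiv:2111.14219 — 4 statements merged into one kernel-verified Lean document; each statement's English description precedes it below -/
import Mathlib

section
/- Let x_1, …, x_N ∈ ℝ^d be partitioned into disjoint clusters S_1, …, S_c with |S_j| = n_j, Σ_j n_j = N, centroids μ_j = (1/n_j) Σ_{i∈S_j} x_i, and global radius δ = max_j max_{i∈S_j} ‖x_i − μ_j‖. Let ℓ : ℝ^k × ℝ^d → ℝ be such that for every fixed θ ∈ ℝ^k the map x ↦ ℓ(θ, x) is differentiable, L₁-Lipschitz, with gradient that is L₂-Lipschitz and also (1/γ)-Lipschitz, where γ > 0, 0 < L₁, 0 < L₂, L₁ ≥ 1. Then for every θ ∈ ℝ^k, | Σ_{j=1}^c Σ_{i∈S_j} (ℓ(θ, x_i) − ℓ(θ, μ_j)) | ≤ (L₁L₂ N + N/(2γ)) · δ². -/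
open Finset

lemma key_taylor {d : ℕ} (f : EuclideanSpace ℝ (Fin d) → ℝ) (hf : Differentiable ℝ f)
    (C : ℝ) (hC : 0 ≤ C) (hLip : ∀ u v, ‖gradient f u - gradient f v‖ ≤ C * ‖u - v‖)
    (u v : EuclideanSpace ℝ (Fin d)) :
    |f u - f v - inner ℝ (gradient f v) (u - v)| ≤ C * ‖u - v‖ ^ 2 := by
  have hseg : ∀ z ∈ segment ℝ v u, ‖z - v‖ ≤ ‖u - v‖ := by
    rintro z ⟨a, b, ha, hb, hab, rfl⟩
    have h : a • v + b • u - v = b • (u - v) := by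
      rw [smul_sub, show a = 1 - b by linarith, sub_smul, one_smul]; abel
    rw [h, norm_smul]
    simp only [Real.norm_eq_abs, abs_of_nonneg hb]
    nlinarith [norm_nonneg (u - v)]
  have hb : ∀ z ∈ segment ℝ v u, ‖fderiv ℝ f z - fderiv ℝ f v‖ ≤ C * ‖u - v‖ := by
    intro z hz
    have h2 : ‖fderiv ℝ f z - fderiv ℝ f v‖ = ‖gradient f z - gradient f v‖ := by
      rw [gradient, gradient, ← LinearIsometryEquiv.map_sub, LinearIsometryEquiv.norm_map]
    rw [h2]
    calc ‖gradient f z - gradient f v‖ ≤ C * ‖z - v‖ := hLip z v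
      _ ≤ C * ‖u - v‖ := mul_le_mul_of_nonneg_left (hseg z hz) hC
  have h3 := (convex_segment v u).norm_image_sub_le_of_norm_fderiv_le'
    (f := f) (φ := fderiv ℝ f v) (fun z _ => (hf z)) hb
    (left_mem_segment ℝ v u) (right_mem_segment ℝ v u)
  have hφ : (fderiv ℝ f v) (u - v) = inner ℝ (gradient f v) (u - v) := by
    have hg := (hf v).hasGradientAt
    rw [hasGradientAt_iff_hasFDerivAt] at hg
    rw [hg.fderiv]
    simp [InnerProductSpace.toDual_apply_apply]
  rw [hφ] at h3
  calc |f u - f v - inner ℝ (gradient f v) (u - v)| ≤ C * ‖u - v‖ * ‖u - v‖ := h3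
    _ = C * ‖u - v‖ ^ 2 := by ring

/-- For data partitioned into `c` disjoint clusters (cluster `j` has `n j` points
`x j 1, …, x j (n j)` with centroid `μ j`), global radius `δ`, and a log-likelihood
`ℓ θ ·` which is differentiable, `L₁`-Lipschitz, with `L₂`-Lipschitz and
`(1/γ)`-Lipschitz gradient for every `θ`, the total log-likelihood error of
replacing each data point by its cluster centroid is at most
`(L₁ L₂ N + N/(2γ)) δ²`. -/
theorem abs_cluster_loglik_error_le
    {d k c : ℕ} (hc : 0 < c) (N : ℕ) (n : Fin c → ℕ) (hn : ∀ j, 0 < n j)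
    (hN : ∑ j, n j = N)
    (x : (j : Fin c) → Fin (n j) → EuclideanSpace ℝ (Fin d))
    (μ : Fin c → EuclideanSpace ℝ (Fin d))
    (hμ : ∀ j, μ j = ((n j : ℝ))⁻¹ • ∑ i, x j i)
    (δ : ℝ)
    (hδ : IsGreatest {r : ℝ | ∃ j i, r = ‖x j i - μ j‖} δ)
    (γ L₁ L₂ : ℝ) (hγ : 0 < γ) (hL₁ : 0 < L₁) (hL₂ : 0 < L₂) (hL₁1 : 1 ≤ L₁)
    (ℓ : EuclideanSpace ℝ (Fin k) → EuclideanSpace ℝ (Fin d) → ℝ)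
    (hdiff : ∀ θ, Differentiable ℝ (ℓ θ))
    (hLip : ∀ θ (u v : EuclideanSpace ℝ (Fin d)), |ℓ θ u - ℓ θ v| ≤ L₁ * ‖u - v‖)
    (hgradLip : ∀ θ (u v : EuclideanSpace ℝ (Fin d)),
      ‖gradient (ℓ θ) u - gradient (ℓ θ) v‖ ≤ L₂ * ‖u - v‖)
    (hgradLip' : ∀ θ (u v : EuclideanSpace ℝ (Fin d)),
      ‖gradient (ℓ θ) u - gradient (ℓ θ) v‖ ≤ (1 / γ) * ‖u - v‖)
    (θ : EuclideanSpace ℝ (Fin k)) :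
    |∑ j, ∑ i, (ℓ θ (x j i) - ℓ θ (μ j))| ≤
      (L₁ * L₂ * N + N / (2 * γ)) * δ ^ 2 := by
  set C : ℝ := min L₂ (1 / γ) with hCdef
  have hC0 : 0 ≤ C := le_min hL₂.le (by positivity)
  have hCLip : ∀ u v, ‖gradient (ℓ θ) u - gradient (ℓ θ) v‖ ≤ C * ‖u - v‖ := by
    intro u v
    rcases min_cases L₂ (1 / γ) with ⟨h, _⟩ | ⟨h, _⟩
    · rw [hCdef, h]; exact hgradLip θ u v
    · rw [hCdef, h]; exact hgradLip' θ u v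
  have hCle : C ≤ L₁ * L₂ := by
    rcases le_total L₂ (1 / γ) with h | h
    · rw [hCdef, min_eq_left h]; nlinarith
    · rw [hCdef, min_eq_right h]; nlinarith
  -- per point distance bound
  have hdist : ∀ j i, ‖x j i - μ j‖ ≤ δ := fun j i => hδ.2 ⟨j, i, rfl⟩
  have hδ0 : 0 ≤ δ := by obtain ⟨j, i, h⟩ := hδ.1; rw [h]; exact norm_nonneg _
  -- per cluster: gradient terms sum to zero
  have hzero : ∀ j : Fin c, ∑ i, (inner ℝ (gradient (ℓ θ) (μ j)) (x j i - μ j) : ℝ) = 0 := by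
    intro j
    rw [← inner_sum]
    have hsum : ∑ i, (x j i - μ j) = 0 := by
      have hne : (n j : ℝ) ≠ 0 := Nat.cast_ne_zero.mpr (hn j).ne'
      rw [Finset.sum_sub_distrib, Finset.sum_const, card_univ, Fintype.card_fin,
        hμ j, ← Nat.cast_smul_eq_nsmul ℝ, smul_smul, mul_inv_cancel₀ hne, one_smul, sub_self]
    rw [hsum, inner_zero_right]
  have hmain : ∀ j : Fin c, |∑ i, (ℓ θ (x j i) - ℓ θ (μ j))| ≤ (n j : ℝ) * (C * δ ^ 2) := by
    intro j
    have heq : ∑ i, (ℓ θ (x j i) - ℓ θ (μ j)) =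
        ∑ i, (ℓ θ (x j i) - ℓ θ (μ j) - inner ℝ (gradient (ℓ θ) (μ j)) (x j i - μ j)) := by
      rw [eq_comm, Finset.sum_sub_distrib, hzero j, sub_zero]
    rw [heq]
    calc |∑ i, (ℓ θ (x j i) - ℓ θ (μ j) - inner ℝ (gradient (ℓ θ) (μ j)) (x j i - μ j))|
        ≤ ∑ i, |ℓ θ (x j i) - ℓ θ (μ j) - inner ℝ (gradient (ℓ θ) (μ j)) (x j i - μ j)| :=
          Finset.abs_sum_le_sum_abs _ _
      _ ≤ ∑ _i : Fin (n j), C * δ ^ 2 := by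
          apply Finset.sum_le_sum
          intro i _
          calc |ℓ θ (x j i) - ℓ θ (μ j) - inner ℝ (gradient (ℓ θ) (μ j)) (x j i - μ j)|
              ≤ C * ‖x j i - μ j‖ ^ 2 :=
                key_taylor (ℓ θ) (hdiff θ) C hC0 hCLip (x j i) (μ j)
            _ ≤ C * δ ^ 2 := by
                apply mul_le_mul_of_nonneg_left _ hC0
                exact pow_le_pow_left₀ (norm_nonneg _) (hdist j i) 2
      _ = (n j : ℝ) * (C * δ ^ 2) := by
          rw [Finset.sum_const, card_univ, Fintype.card_fin, nsmul_eq_mul]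
  calc |∑ j, ∑ i, (ℓ θ (x j i) - ℓ θ (μ j))|
      ≤ ∑ j, |∑ i, (ℓ θ (x j i) - ℓ θ (μ j))| := Finset.abs_sum_le_sum_abs _ _
    _ ≤ ∑ j, (n j : ℝ) * (C * δ ^ 2) := Finset.sum_le_sum fun j _ => hmain j
    _ = (N : ℝ) * (C * δ ^ 2) := by
        rw [← Finset.sum_mul, ← Nat.cast_sum, hN]
    _ ≤ (L₁ * L₂ * N + N / (2 * γ)) * δ ^ 2 := by
        have hN0 : (0:ℝ) ≤ N := Nat.cast_nonneg N
        have hδ2 : 0 ≤ δ ^ 2 := sq_nonneg δ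
        have : (N : ℝ) * C ≤ L₁ * L₂ * N + N / (2 * γ) := by
          have h1 : (N : ℝ) * C ≤ N * (L₁ * L₂) := by nlinarith
          have h2 : 0 ≤ (N : ℝ) / (2 * γ) := by positivity
          nlinarith
        nlinarith
end

section
/- Let x_1, …, x_N ∈ ℝ^d be partitioned into disjoint clusters S_1, …, S_c with |S_j| = n_j, centroids μ_j, and global radius δ. Let ℓ : ℝ^k × ℝ^d → ℝ be such that for every fixed θ the map x ↦ ℓ(θ, x) is differentiable, L₁-Lipschitz, with gradient that is L₂-Lipschitz and also (1/γ)-Lipschitz, where γ > 0, 0 < L₁, 0 < L₂, L₁ ≥ 1. Let p₀ : ℝ^k → ℝ be a nonnegative prior density, and set Z = ∫ p₀(θ) exp(Σ_{i=1}^N ℓ(θ, x_i)) dθ and Z̃ = ∫ p₀(θ) exp(Σ_{j=1}^c n_j ℓ(θ, μ_j)) dθ, assumed to satisfy 0 < Z < ∞ and 0 < Z̃ < ∞. Then with K₁ = L₁L₂ N + N/(2γ), one has exp(−K₁ δ²) ≤ Z / Z̃ ≤ exp(K₁ δ²); equivalently |ln(Z̃ / Z)| ≤ K₁ δ². -/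
open Finset MeasureTheory

lemma descent_lemma {E : Type*} [NormedAddCommGroup E] [InnerProductSpace ℝ E] [CompleteSpace E]
    {f : E → ℝ} (hf : Differentiable ℝ f) {C : ℝ} (hC : 0 ≤ C)
    (hlip : ∀ u v, ‖gradient f u - gradient f v‖ ≤ C * ‖u - v‖)
    (x y : E) :
    |f y - f x - inner ℝ (gradient f x) (y - x)| ≤ C / 2 * ‖y - x‖ ^ 2 := by
  set v := y - x with hv
  -- derivative of the path
  have hline : ∀ t : ℝ, HasDerivAt (fun t : ℝ => x + t • v) v t := by
    intro t
    simpa using ((hasDerivAt_id t).smul_const v).const_add x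
  have hinner : ∀ p : E, (fderiv ℝ f p) v = inner ℝ (gradient f p) v := by
    intro p
    have : fderiv ℝ f p = InnerProductSpace.toDual ℝ E (gradient f p) := by
      rw [gradient, LinearIsometryEquiv.apply_symm_apply]
    rw [this, InnerProductSpace.toDual_apply_apply]
  have hφ : ∀ t : ℝ, HasDerivAt (fun t : ℝ => f (x + t • v))
      (inner ℝ (gradient f (x + t • v)) v) t := by
    intro t
    have := (hf (x + t • v)).hasFDerivAt.comp_hasDerivAt t (hline t)
    rw [← hinner]; exact this
  -- continuity of the derivative
  have hgradcont : Continuous (gradient f) := by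
    have : LipschitzWith (Real.toNNReal C) (gradient f) := by
      apply LipschitzWith.of_dist_le_mul
      intro u w
      simpa [dist_eq_norm, Real.coe_toNNReal C hC] using hlip u w
    exact this.continuous
  have hcont : Continuous fun t : ℝ => (inner ℝ (gradient f (x + t • v)) v : ℝ) := by
    apply Continuous.inner
    · exact hgradcont.comp (by continuity)
    · exact continuous_const
  have hFTC : f (x + (1:ℝ) • v) - f (x + (0:ℝ) • v)
      = ∫ t in (0:ℝ)..1, (inner ℝ (gradient f (x + t • v)) v : ℝ) := by
    rw [intervalIntegral.integral_eq_sub_of_hasDerivAt (fun t _ => hφ t)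
      (hcont.intervalIntegrable 0 1)]
  have key : f y - f x - inner ℝ (gradient f x) v
      = ∫ t in (0:ℝ)..1, ((inner ℝ (gradient f (x + t • v)) v : ℝ) - inner ℝ (gradient f x) v) := by
    rw [intervalIntegral.integral_sub (hcont.intervalIntegrable 0 1)
      (intervalIntegrable_const)]
    simp only [intervalIntegral.integral_const, sub_zero, smul_eq_mul, one_mul]
    have := hFTC
    simp only [one_smul, zero_smul, add_zero] at this
    have hy : x + v = y := by rw [hv]; abel
    rw [hy] at this
    linarith [this]
  rw [key]
  have hbound : ∀ t ∈ Set.uIcc (0:ℝ) 1,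
      |(inner ℝ (gradient f (x + t • v)) v : ℝ) - inner ℝ (gradient f x) v| ≤ C * t * ‖v‖ ^ 2 := by
    intro t ht
    rw [Set.uIcc_of_le zero_le_one] at ht
    have h1 : (inner ℝ (gradient f (x + t • v)) v : ℝ) - inner ℝ (gradient f x) v
        = inner ℝ (gradient f (x + t • v) - gradient f x) v := by
      rw [inner_sub_left]
    rw [h1]
    calc |(inner ℝ (gradient f (x + t • v) - gradient f x) v : ℝ)|
        ≤ ‖gradient f (x + t • v) - gradient f x‖ * ‖v‖ := abs_real_inner_le_norm _ _
      _ ≤ (C * ‖(x + t • v) - x‖) * ‖v‖ := by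
          gcongr; exact hlip _ _
      _ = C * t * ‖v‖ ^ 2 := by
          rw [add_sub_cancel_left, norm_smul]
          simp [Real.norm_eq_abs, abs_of_nonneg ht.1]
          ring
  calc |∫ t in (0:ℝ)..1, ((inner ℝ (gradient f (x + t • v)) v : ℝ) - inner ℝ (gradient f x) v)|
      ≤ ∫ t in (0:ℝ)..1, C * t * ‖v‖ ^ 2 := by
        have h1 : |∫ t in (0:ℝ)..1, ((inner ℝ (gradient f (x + t • v)) v : ℝ) - inner ℝ (gradient f x) v)|
            ≤ ∫ t in (0:ℝ)..1, |(inner ℝ (gradient f (x + t • v)) v : ℝ) - inner ℝ (gradient f x) v| :=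
          intervalIntegral.abs_integral_le_integral_abs zero_le_one
        refine h1.trans ?_
        apply intervalIntegral.integral_mono_on zero_le_one
        · exact ((hcont.sub continuous_const).abs).intervalIntegrable 0 1 |>.mono_set (by simp [Set.uIcc_of_le zero_le_one])
        · exact (Continuous.intervalIntegrable (by continuity) 0 1)
        · intro t ht
          exact hbound t (by rw [Set.uIcc_of_le zero_le_one]; exact ht)
    _ = C / 2 * ‖v‖ ^ 2 := by
        have h2 : ∀ t : ℝ, C * t * ‖v‖ ^ 2 = (C * ‖v‖ ^ 2) * t := fun t => by ring
        simp_rw [h2]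
        rw [intervalIntegral.integral_const_mul, integral_id]
        ring

/-- The ratio of the normalizing constants of the exact posterior
(`Z = ∫ p₀(θ) exp(∑ᵢ ℓ(θ, xᵢ)) dθ`) and the approximate posterior obtained by
replacing every data point by its cluster centroid
(`Z̃ = ∫ p₀(θ) exp(∑ⱼ nⱼ ℓ(θ, μⱼ)) dθ`) is sandwiched between
`exp(−K₁ δ²)` and `exp(K₁ δ²)` where `K₁ = L₁ L₂ N + N/(2γ)`. -/
theorem normalizing_constant_ratio_bound
    {d k c : ℕ} (hc : 0 < c) (N : ℕ) (n : Fin c → ℕ) (hn : ∀ j, 0 < n j)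
    (hN : ∑ j, n j = N)
    (x : (j : Fin c) → Fin (n j) → EuclideanSpace ℝ (Fin d))
    (μ : Fin c → EuclideanSpace ℝ (Fin d))
    (hμ : ∀ j, μ j = ((n j : ℝ))⁻¹ • ∑ i, x j i)
    (δ : ℝ)
    (hδ : IsGreatest {r : ℝ | ∃ j i, r = ‖x j i - μ j‖} δ)
    (γ L₁ L₂ : ℝ) (hγ : 0 < γ) (hL₁ : 0 < L₁) (hL₂ : 0 < L₂) (hL₁1 : 1 ≤ L₁)
    (ℓ : EuclideanSpace ℝ (Fin k) → EuclideanSpace ℝ (Fin d) → ℝ)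
    (hdiff : ∀ θ, Differentiable ℝ (ℓ θ))
    (hLip : ∀ θ (u v : EuclideanSpace ℝ (Fin d)), |ℓ θ u - ℓ θ v| ≤ L₁ * ‖u - v‖)
    (hgradLip : ∀ θ (u v : EuclideanSpace ℝ (Fin d)),
      ‖gradient (ℓ θ) u - gradient (ℓ θ) v‖ ≤ L₂ * ‖u - v‖)
    (hgradLip' : ∀ θ (u v : EuclideanSpace ℝ (Fin d)),
      ‖gradient (ℓ θ) u - gradient (ℓ θ) v‖ ≤ (1 / γ) * ‖u - v‖)
    (p₀ : EuclideanSpace ℝ (Fin k) → ℝ) (hp₀ : ∀ θ, 0 ≤ p₀ θ)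
    (Z Ztil : ℝ)
    (hZdef : Z = ∫ θ : EuclideanSpace ℝ (Fin k),
      p₀ θ * Real.exp (∑ j, ∑ i, ℓ θ (x j i)))
    (hZint : Integrable (fun θ : EuclideanSpace ℝ (Fin k) =>
      p₀ θ * Real.exp (∑ j, ∑ i, ℓ θ (x j i))))
    (hZpos : 0 < Z)
    (hZtdef : Ztil = ∫ θ : EuclideanSpace ℝ (Fin k),
      p₀ θ * Real.exp (∑ j, (n j : ℝ) * ℓ θ (μ j)))
    (hZtint : Integrable (fun θ : EuclideanSpace ℝ (Fin k) =>
      p₀ θ * Real.exp (∑ j, (n j : ℝ) * ℓ θ (μ j))))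
    (hZtpos : 0 < Ztil) :
    Real.exp (-(L₁ * L₂ * N + N / (2 * γ)) * δ ^ 2) ≤ Z / Ztil ∧
      Z / Ztil ≤ Real.exp ((L₁ * L₂ * N + N / (2 * γ)) * δ ^ 2) := by
  classical
  set K : ℝ := L₁ * L₂ * N + N / (2 * γ) with hK
  -- δ is nonnegative
  have hδ0 : 0 ≤ δ := by
    obtain ⟨j, i, h⟩ := hδ.1
    rw [h]; exact norm_nonneg _
  have hδle : ∀ j i, ‖x j i - μ j‖ ≤ δ := fun j i => hδ.2 ⟨j, i, rfl⟩
  -- pointwise bound on the log-likelihood difference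
  have hsum : ∀ θ, |(∑ j, ∑ i, ℓ θ (x j i)) - ∑ j, (n j : ℝ) * ℓ θ (μ j)| ≤ K * δ ^ 2 := by
    intro θ
    have hcluster : ∀ j, |(∑ i, ℓ θ (x j i)) - (n j : ℝ) * ℓ θ (μ j)|
        ≤ (n j : ℝ) * ((1 / γ) / 2 * δ ^ 2) := by
      intro j
      have hnj : ((n j : ℝ)) ≠ 0 := Nat.cast_ne_zero.mpr (hn j).ne'
      have hsmul : (n j : ℝ) • μ j = ∑ i, x j i := by
        rw [hμ j, smul_smul, mul_inv_cancel₀ hnj, one_smul]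
      have hzero : ∑ i, (x j i - μ j) = 0 := by
        rw [Finset.sum_sub_distrib, Finset.sum_const, Finset.card_univ, Fintype.card_fin,
          sub_eq_zero, ← hsmul, Nat.cast_smul_eq_nsmul]
      have hinner0 : ∑ i, (inner ℝ (gradient (ℓ θ) (μ j)) (x j i - μ j) : ℝ) = 0 := by
        rw [← inner_sum, hzero, inner_zero_right]
      have hrw : (∑ i, ℓ θ (x j i)) - (n j : ℝ) * ℓ θ (μ j)
          = ∑ i, (ℓ θ (x j i) - ℓ θ (μ j) - (inner ℝ (gradient (ℓ θ) (μ j)) (x j i - μ j) : ℝ)) := by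
        rw [Finset.sum_sub_distrib, Finset.sum_sub_distrib, hinner0, sub_zero,
          Finset.sum_const, Finset.card_univ, Fintype.card_fin]
        simp [nsmul_eq_mul]
      rw [hrw]
      calc |∑ i, (ℓ θ (x j i) - ℓ θ (μ j) - (inner ℝ (gradient (ℓ θ) (μ j)) (x j i - μ j) : ℝ))|
          ≤ ∑ i, |ℓ θ (x j i) - ℓ θ (μ j) - (inner ℝ (gradient (ℓ θ) (μ j)) (x j i - μ j) : ℝ)| :=
            Finset.abs_sum_le_sum_abs _ _
        _ ≤ ∑ _i : Fin (n j), (1 / γ) / 2 * δ ^ 2 := by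
            apply Finset.sum_le_sum
            intro i _
            have h1 := descent_lemma (hdiff θ) (by positivity : (0:ℝ) ≤ 1 / γ)
              (hgradLip' θ) (μ j) (x j i)
            refine h1.trans ?_
            gcongr
            exact hδle j i
        _ = (n j : ℝ) * ((1 / γ) / 2 * δ ^ 2) := by
            rw [Finset.sum_const, Finset.card_univ, Fintype.card_fin, nsmul_eq_mul]
    have htot : |(∑ j, ∑ i, ℓ θ (x j i)) - ∑ j, (n j : ℝ) * ℓ θ (μ j)|
        ≤ (N : ℝ) * ((1 / γ) / 2 * δ ^ 2) := by
      rw [← Finset.sum_sub_distrib]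
      calc |∑ j, ((∑ i, ℓ θ (x j i)) - (n j : ℝ) * ℓ θ (μ j))|
          ≤ ∑ j, |(∑ i, ℓ θ (x j i)) - (n j : ℝ) * ℓ θ (μ j)| := Finset.abs_sum_le_sum_abs _ _
        _ ≤ ∑ j, (n j : ℝ) * ((1 / γ) / 2 * δ ^ 2) := Finset.sum_le_sum fun j _ => hcluster j
        _ = (N : ℝ) * ((1 / γ) / 2 * δ ^ 2) := by
            rw [← Finset.sum_mul, ← Nat.cast_sum, hN]
    refine htot.trans ?_
    have h1 : (N : ℝ) * ((1 / γ) / 2 * δ ^ 2) = N / (2 * γ) * δ ^ 2 := by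
      ring
    have h2 : 0 ≤ L₁ * L₂ * N * δ ^ 2 := by positivity
    rw [h1, hK]; nlinarith
  -- upper bound on Z
  have hup : Z ≤ Ztil * Real.exp (K * δ ^ 2) := by
    rw [hZdef, hZtdef, ← integral_mul_const _ _]
    apply integral_mono hZint (hZtint.mul_const _)
    intro θ
    have h1 : (∑ j, ∑ i, ℓ θ (x j i)) ≤ (∑ j, (n j : ℝ) * ℓ θ (μ j)) + K * δ ^ 2 := by
      have := abs_le.1 (hsum θ); linarith [this.2]
    calc p₀ θ * Real.exp (∑ j, ∑ i, ℓ θ (x j i))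
        ≤ p₀ θ * Real.exp ((∑ j, (n j : ℝ) * ℓ θ (μ j)) + K * δ ^ 2) := by
          apply mul_le_mul_of_nonneg_left (Real.exp_le_exp.2 h1) (hp₀ θ)
      _ = p₀ θ * Real.exp (∑ j, (n j : ℝ) * ℓ θ (μ j)) * Real.exp (K * δ ^ 2) := by
          rw [Real.exp_add]; ring
  -- lower bound on Z
  have hlo : Ztil * Real.exp (-(K * δ ^ 2)) ≤ Z := by
    rw [hZdef, hZtdef, ← integral_mul_const _ _]
    apply integral_mono (hZtint.mul_const _) hZint
    intro θ
    have h1 : (∑ j, (n j : ℝ) * ℓ θ (μ j)) + -(K * δ ^ 2) ≤ ∑ j, ∑ i, ℓ θ (x j i) := by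
      have := abs_le.1 (hsum θ); linarith [this.1]
    calc p₀ θ * Real.exp (∑ j, (n j : ℝ) * ℓ θ (μ j)) * Real.exp (-(K * δ ^ 2))
        = p₀ θ * Real.exp ((∑ j, (n j : ℝ) * ℓ θ (μ j)) + -(K * δ ^ 2)) := by
          rw [Real.exp_add]; ring
      _ ≤ p₀ θ * Real.exp (∑ j, ∑ i, ℓ θ (x j i)) :=
          mul_le_mul_of_nonneg_left (Real.exp_le_exp.2 h1) (hp₀ θ)
  constructor
  · rw [le_div_iff₀ hZtpos]
    have : Real.exp (-K * δ ^ 2) * Ztil = Ztil * Real.exp (-(K * δ ^ 2)) := by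
      rw [neg_mul]; ring
    rw [this]; exact hlo
  · rw [div_le_iff₀ hZtpos]
    calc Z ≤ Ztil * Real.exp (K * δ ^ 2) := hup
      _ = Real.exp (K * δ ^ 2) * Ztil := mul_comm _ _
end

section
/- In the setting of clustered data with global radius δ, log-likelihood ℓ satisfying for every θ: x ↦ ℓ(θ, x) differentiable, L₁-Lipschitz, with gradient L₂-Lipschitz and (1/γ)-Lipschitz (γ > 0, 0 < L₁, 0 < L₂, L₁ ≥ 1), strictly positive prior density p₀ : ℝ^k → ℝ, and finite positive normalizing constants Z = ∫ p₀(θ) exp(Σ_i ℓ(θ, x_i)) dθ and Z̃ = ∫ p₀(θ) exp(Σ_j n_j ℓ(θ, μ_j)) dθ, define the exact posterior density p(θ|X) = (1/Z) p₀(θ) exp(Σ_{i=1}^N ℓ(θ, x_i)) and the approximate posterior density p̃(θ|X) = (1/Z̃) p₀(θ) exp(Σ_{j=1}^c n_j ℓ(θ, μ_j)). Then for every θ ∈ ℝ^k, |ln( p(θ|X) / p̃(θ|X) )| ≤ 2 K₁ δ², where K₁ = L₁L₂ N + N/(2γ). -/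
/-!
A second-order Taylor expansion of `ℓ θ` around each centroid `μⱼ` has a linear term
`⟪∇ℓ θ (μⱼ), xᵢ - μⱼ⟫` that cancels after summing over the cluster, since the deviations from a
centroid sum to zero. Hence the exact and the clustered log-likelihoods differ by at most
`K = L₂ N δ²` for every `θ`. The normalising constants are integrals of the two unnormalised
densities, which therefore agree up to a factor in `[exp (-K), exp K]`, so their logarithms also
differ by at most `K`. The log ratio of the posteriors is bounded by `2K ≤ 2 K₁ δ²`.
-/

open Finset MeasureTheory InnerProductSpace Real

section Centroid

variable {𝕜 V ι : Type*} [Field 𝕜] [CharZero 𝕜] [AddCommGroup V] [Module 𝕜 V]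

theorem sum_sub_centroid_eq_zero (s : Finset ι) (y : ι → V) :
    ∑ i ∈ s, (y i - (#s : 𝕜)⁻¹ • ∑ i ∈ s, y i) = 0 := by
  rcases s.eq_empty_or_nonempty with rfl | hs
  · simp
  rw [sum_sub_distrib, sum_const, ← Nat.cast_smul_eq_nsmul 𝕜,
    smul_inv_smul₀ (Nat.cast_ne_zero.mpr hs.card_pos.ne'), sub_self]

end Centroid

section Taylor

variable {E : Type*} [NormedAddCommGroup E] [InnerProductSpace ℝ E] [CompleteSpace E]
  {f : E → ℝ} {L : ℝ}

theorem abs_sub_sub_inner_gradient_le (hf : Differentiable ℝ f) (hL : 0 ≤ L)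
    (hg : ∀ u v, ‖gradient f u - gradient f v‖ ≤ L * ‖u - v‖) (u v : E) :
    |f u - f v - ⟪gradient f v, u - v⟫_ℝ| ≤ L * ‖u - v‖ ^ 2 := by
  set g := gradient f v
  have hderiv : ∀ w, HasFDerivAt (fun w => f w - ⟪g, w⟫_ℝ) (toDual ℝ E (gradient f w - g)) w := by
    intro w
    rw [map_sub]
    exact (hf w).hasGradientAt.hasFDerivAt.sub (toDual ℝ E g).hasFDerivAt
  have hbound : ∀ w ∈ Metric.closedBall v ‖u - v‖,
      ‖toDual ℝ E (gradient f w - g)‖ ≤ L * ‖u - v‖ := by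
    intro w hw
    rw [LinearIsometryEquiv.norm_map]
    rw [Metric.mem_closedBall, dist_eq_norm] at hw
    exact (hg w v).trans (mul_le_mul_of_nonneg_left hw hL)
  have hmvt := (convex_closedBall v ‖u - v‖).norm_image_sub_le_of_norm_hasFDerivWithin_le
    (fun w _ => (hderiv w).hasFDerivWithinAt) hbound
    (Metric.mem_closedBall_self (norm_nonneg _)) (Metric.mem_closedBall.mpr (dist_eq_norm u v).le)
  rw [Real.norm_eq_abs] at hmvt
  calc |f u - f v - ⟪g, u - v⟫_ℝ| = |f u - ⟪g, u⟫_ℝ - (f v - ⟪g, v⟫_ℝ)| := by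
        rw [inner_sub_right]; ring
    _ ≤ L * ‖u - v‖ * ‖u - v‖ := hmvt
    _ = L * ‖u - v‖ ^ 2 := by ring

theorem abs_sum_sub_card_mul_centroid_le (hf : Differentiable ℝ f) (hL : 0 ≤ L)
    (hg : ∀ u v, ‖gradient f u - gradient f v‖ ≤ L * ‖u - v‖) {ι : Type*} (s : Finset ι)
    (y : ι → E) {μ : E} (hμ : μ = (#s : ℝ)⁻¹ • ∑ i ∈ s, y i) {δ : ℝ}
    (hδ : ∀ i ∈ s, ‖y i - μ‖ ≤ δ) :
    |∑ i ∈ s, f (y i) - #s * f μ| ≤ #s * (L * δ ^ 2) := by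
  have hlinear : ∑ i ∈ s, ⟪gradient f μ, y i - μ⟫_ℝ = 0 := by
    rw [← inner_sum, hμ, sum_sub_centroid_eq_zero, inner_zero_right]
  calc |∑ i ∈ s, f (y i) - #s * f μ|
      = |∑ i ∈ s, (f (y i) - f μ - ⟪gradient f μ, y i - μ⟫_ℝ)| := by
        rw [sum_sub_distrib, sum_sub_distrib, hlinear, sum_const, nsmul_eq_mul, sub_zero]
    _ ≤ ∑ i ∈ s, |f (y i) - f μ - ⟪gradient f μ, y i - μ⟫_ℝ| := abs_sum_le_sum_abs _ _
    _ ≤ ∑ i ∈ s, L * δ ^ 2 := sum_le_sum fun i hi =>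
        (abs_sub_sub_inner_gradient_le hf hL hg _ _).trans
          (mul_le_mul_of_nonneg_left (pow_le_pow_left₀ (norm_nonneg _) (hδ i hi) 2) hL)
    _ = #s * (L * δ ^ 2) := by rw [sum_const, nsmul_eq_mul]

theorem abs_sum_sub_sum_card_mul_centroid_le (hf : Differentiable ℝ f) (hL : 0 ≤ L)
    (hg : ∀ u v, ‖gradient f u - gradient f v‖ ≤ L * ‖u - v‖) {κ : Type*} [Fintype κ]
    (n : κ → ℕ) (x : (j : κ) → Fin (n j) → E) (μ : κ → E)
    (hμ : ∀ j, μ j = ((n j : ℝ))⁻¹ • ∑ i, x j i) {δ : ℝ} (hδ : ∀ j i, ‖x j i - μ j‖ ≤ δ) :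
    |∑ j, ∑ i, f (x j i) - ∑ j, (n j : ℝ) * f (μ j)| ≤ (∑ j, n j : ℕ) * (L * δ ^ 2) := by
  have hcluster (j : κ) : |∑ i, f (x j i) - n j * f (μ j)| ≤ n j * (L * δ ^ 2) := by
    simpa using abs_sum_sub_card_mul_centroid_le hf hL hg univ (x j) (by simpa using hμ j)
      fun i _ => hδ j i
  calc |∑ j, ∑ i, f (x j i) - ∑ j, (n j : ℝ) * f (μ j)|
      ≤ ∑ j, |∑ i, f (x j i) - n j * f (μ j)| := by
        rw [← sum_sub_distrib]; exact abs_sum_le_sum_abs _ _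
    _ ≤ ∑ j, n j * (L * δ ^ 2) := sum_le_sum fun j _ => hcluster j
    _ = (∑ j, n j : ℕ) * (L * δ ^ 2) := by rw [← sum_mul]; push_cast; rfl

end Taylor

section Normalization

variable {α : Type*} [MeasurableSpace α] {ν : Measure α} {p F G : α → ℝ} {K : ℝ}

theorem integral_mul_exp_le_exp_mul_integral (hp : ∀ a, 0 ≤ p a) (hFG : ∀ a, F a ≤ G a + K)
    (hG : Integrable (fun a => p a * exp (G a)) ν) :
    ∫ a, p a * exp (F a) ∂ν ≤ exp K * ∫ a, p a * exp (G a) ∂ν := by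
  rw [← integral_const_mul]
  refine integral_mono_of_nonneg (.of_forall fun a => mul_nonneg (hp a) (exp_pos _).le)
    (hG.const_mul _) (.of_forall fun a => ?_)
  calc p a * exp (F a) ≤ p a * exp (G a + K) := by gcongr; exacts [hp a, hFG a]
    _ = exp K * (p a * exp (G a)) := by rw [exp_add]; ring

theorem abs_log_sub_log_le_of_le_exp_mul {a b : ℝ} (ha : 0 < a) (hb : 0 < b)
    (hab : a ≤ exp K * b) (hba : b ≤ exp K * a) : |log a - log b| ≤ K := by
  have hab' := log_le_log ha hab
  have hba' := log_le_log hb hba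
  rw [log_mul (exp_ne_zero K) hb.ne', log_exp] at hab'
  rw [log_mul (exp_ne_zero K) ha.ne', log_exp] at hba'
  exact abs_sub_le_iff.mpr ⟨by linarith, by linarith⟩

theorem abs_log_integral_mul_exp_sub_le (hp : ∀ a, 0 ≤ p a) (hFG : ∀ a, |F a - G a| ≤ K)
    (hF : Integrable (fun a => p a * exp (F a)) ν) (hG : Integrable (fun a => p a * exp (G a)) ν)
    (hFpos : 0 < ∫ a, p a * exp (F a) ∂ν) (hGpos : 0 < ∫ a, p a * exp (G a) ∂ν) :
    |log (∫ a, p a * exp (F a) ∂ν) - log (∫ a, p a * exp (G a) ∂ν)| ≤ K :=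
  abs_log_sub_log_le_of_le_exp_mul hFpos hGpos
    (integral_mul_exp_le_exp_mul_integral hp (fun a => by linarith [(abs_le.mp (hFG a)).2]) hG)
    (integral_mul_exp_le_exp_mul_integral hp (fun a => by linarith [(abs_le.mp (hFG a)).1]) hF)

end Normalization

theorem log_div_normalized_mul_exp {Z Z' q A B : ℝ} (hZ : 0 < Z) (hZ' : 0 < Z') (hq : q ≠ 0) :
    log ((1 / Z) * q * exp A / ((1 / Z') * q * exp B)) = A - B + (log Z' - log Z) := by
  have hratio : (1 / Z) * q * exp A / ((1 / Z') * q * exp B) = Z' / Z * exp (A - B) := by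
    rw [exp_sub]; field_simp
  rw [hratio, log_mul (by positivity) (exp_ne_zero _), log_div hZ'.ne' hZ.ne', log_exp]
  ring

theorem abs_log_posterior_ratio_le_general
    {d k c : ℕ} (N : ℕ) (n : Fin c → ℕ)
    (hN : ∑ j, n j = N)
    (x : (j : Fin c) → Fin (n j) → EuclideanSpace ℝ (Fin d))
    (μ : Fin c → EuclideanSpace ℝ (Fin d))
    (hμ : ∀ j, μ j = ((n j : ℝ))⁻¹ • ∑ i, x j i)
    (δ : ℝ)
    (hδ : IsGreatest {r : ℝ | ∃ j i, r = ‖x j i - μ j‖} δ)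
    (γ L₁ L₂ : ℝ) (hγ : 0 < γ) (hL₂ : 0 < L₂) (hL₁1 : 1 ≤ L₁)
    (ℓ : EuclideanSpace ℝ (Fin k) → EuclideanSpace ℝ (Fin d) → ℝ)
    (hdiff : ∀ θ, Differentiable ℝ (ℓ θ))
    (hgradLip : ∀ θ (u v : EuclideanSpace ℝ (Fin d)),
      ‖gradient (ℓ θ) u - gradient (ℓ θ) v‖ ≤ L₂ * ‖u - v‖)
    (p₀ : EuclideanSpace ℝ (Fin k) → ℝ) (hp₀ : ∀ θ, 0 < p₀ θ)
    (Z Ztil : ℝ)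
    (hZdef : Z = ∫ θ : EuclideanSpace ℝ (Fin k),
      p₀ θ * Real.exp (∑ j, ∑ i, ℓ θ (x j i)))
    (hZint : Integrable (fun θ : EuclideanSpace ℝ (Fin k) =>
      p₀ θ * Real.exp (∑ j, ∑ i, ℓ θ (x j i))))
    (hZpos : 0 < Z)
    (hZtdef : Ztil = ∫ θ : EuclideanSpace ℝ (Fin k),
      p₀ θ * Real.exp (∑ j, (n j : ℝ) * ℓ θ (μ j)))
    (hZtint : Integrable (fun θ : EuclideanSpace ℝ (Fin k) =>
      p₀ θ * Real.exp (∑ j, (n j : ℝ) * ℓ θ (μ j))))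
    (hZtpos : 0 < Ztil)
    (θ : EuclideanSpace ℝ (Fin k)) :
    |Real.log
        (((1 / Z) * p₀ θ * Real.exp (∑ j, ∑ i, ℓ θ (x j i))) /
          ((1 / Ztil) * p₀ θ * Real.exp (∑ j, (n j : ℝ) * ℓ θ (μ j))))| ≤
      2 * (L₁ * L₂ * N + N / (2 * γ)) * δ ^ 2 := by
  have hAB (θ : EuclideanSpace ℝ (Fin k)) :
      |∑ j, ∑ i, ℓ θ (x j i) - ∑ j, (n j : ℝ) * ℓ θ (μ j)| ≤ N * (L₂ * δ ^ 2) :=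
    hN ▸ abs_sum_sub_sum_card_mul_centroid_le (hdiff θ) hL₂.le (hgradLip θ) n x μ hμ
      fun j i => hδ.2 ⟨j, i, rfl⟩
  have hlogZ : |log Ztil - log Z| ≤ N * (L₂ * δ ^ 2) := by
    rw [abs_sub_comm]
    subst hZdef hZtdef
    exact abs_log_integral_mul_exp_sub_le (fun θ => (hp₀ θ).le) hAB hZint hZtint hZpos hZtpos
  have hconst : (N : ℝ) * L₂ ≤ L₁ * L₂ * N + N / (2 * γ) := by
    have hN_le : (N : ℝ) * L₂ ≤ L₁ * L₂ * N := by
      nlinarith [mul_nonneg (Nat.cast_nonneg (α := ℝ) N) hL₂.le]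
    linarith [show (0 : ℝ) ≤ N / (2 * γ) by positivity]
  rw [log_div_normalized_mul_exp hZpos hZtpos (hp₀ θ).ne']
  calc _ ≤ |∑ j, ∑ i, ℓ θ (x j i) - ∑ j, (n j : ℝ) * ℓ θ (μ j)| + |log Ztil - log Z| :=
        abs_add_le _ _
    _ ≤ 2 * (N * L₂) * δ ^ 2 := by linarith [hAB θ]
    _ ≤ 2 * (L₁ * L₂ * N + N / (2 * γ)) * δ ^ 2 := by gcongr

/-- For the exact posterior density `p(θ|X) = (1/Z) p₀(θ) exp(∑ᵢ ℓ(θ, xᵢ))` and the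
approximate posterior density `p̃(θ|X) = (1/Z̃) p₀(θ) exp(∑ⱼ nⱼ ℓ(θ, μⱼ))` built from
the cluster centroids, the log density ratio is uniformly bounded:
`|ln(p(θ|X)/p̃(θ|X))| ≤ 2 K₁ δ²` with `K₁ = L₁ L₂ N + N/(2γ)`. -/
theorem abs_log_posterior_ratio_le
    {d k c : ℕ} (hc : 0 < c) (N : ℕ) (n : Fin c → ℕ) (hn : ∀ j, 0 < n j)
    (hN : ∑ j, n j = N)
    (x : (j : Fin c) → Fin (n j) → EuclideanSpace ℝ (Fin d))
    (μ : Fin c → EuclideanSpace ℝ (Fin d))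
    (hμ : ∀ j, μ j = ((n j : ℝ))⁻¹ • ∑ i, x j i)
    (δ : ℝ)
    (hδ : IsGreatest {r : ℝ | ∃ j i, r = ‖x j i - μ j‖} δ)
    (γ L₁ L₂ : ℝ) (hγ : 0 < γ) (hL₁ : 0 < L₁) (hL₂ : 0 < L₂) (hL₁1 : 1 ≤ L₁)
    (ℓ : EuclideanSpace ℝ (Fin k) → EuclideanSpace ℝ (Fin d) → ℝ)
    (hdiff : ∀ θ, Differentiable ℝ (ℓ θ))
    (hLip : ∀ θ (u v : EuclideanSpace ℝ (Fin d)), |ℓ θ u - ℓ θ v| ≤ L₁ * ‖u - v‖)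
    (hgradLip : ∀ θ (u v : EuclideanSpace ℝ (Fin d)),
      ‖gradient (ℓ θ) u - gradient (ℓ θ) v‖ ≤ L₂ * ‖u - v‖)
    (hgradLip' : ∀ θ (u v : EuclideanSpace ℝ (Fin d)),
      ‖gradient (ℓ θ) u - gradient (ℓ θ) v‖ ≤ (1 / γ) * ‖u - v‖)
    (p₀ : EuclideanSpace ℝ (Fin k) → ℝ) (hp₀ : ∀ θ, 0 < p₀ θ)
    (Z Ztil : ℝ)
    (hZdef : Z = ∫ θ : EuclideanSpace ℝ (Fin k),
      p₀ θ * Real.exp (∑ j, ∑ i, ℓ θ (x j i)))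
    (hZint : Integrable (fun θ : EuclideanSpace ℝ (Fin k) =>
      p₀ θ * Real.exp (∑ j, ∑ i, ℓ θ (x j i))))
    (hZpos : 0 < Z)
    (hZtdef : Ztil = ∫ θ : EuclideanSpace ℝ (Fin k),
      p₀ θ * Real.exp (∑ j, (n j : ℝ) * ℓ θ (μ j)))
    (hZtint : Integrable (fun θ : EuclideanSpace ℝ (Fin k) =>
      p₀ θ * Real.exp (∑ j, (n j : ℝ) * ℓ θ (μ j))))
    (hZtpos : 0 < Ztil)
    (θ : EuclideanSpace ℝ (Fin k)) :
    |Real.log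
        (((1 / Z) * p₀ θ * Real.exp (∑ j, ∑ i, ℓ θ (x j i))) /
          ((1 / Ztil) * p₀ θ * Real.exp (∑ j, (n j : ℝ) * ℓ θ (μ j))))| ≤
      2 * (L₁ * L₂ * N + N / (2 * γ)) * δ ^ 2 :=
  abs_log_posterior_ratio_le_general N n hN x μ hμ δ hδ γ L₁ L₂ hγ hL₂ hL₁1 ℓ hdiff hgradLip p₀ hp₀
    Z Ztil hZdef hZint hZpos hZtdef hZtint hZtpos θ
end

section
/- (Theorem 1, main result.) Let x_1, …, x_N ∈ ℝ^d be partitioned into disjoint clusters S_1, …, S_c with cluster sizes n_j, centroids μ_j = (1/n_j) Σ_{i∈S_j} x_i, and global radius δ = max_j max_{i∈S_j} ‖x_i − μ_j‖. Let ℓ : ℝ^k × ℝ^d → ℝ be such that for every fixed θ the map x ↦ ℓ(θ, x) is differentiable, L₁-Lipschitz, with gradient that is L₂-Lipschitz and also (1/γ)-Lipschitz (γ > 0, 0 < L₁, 0 < L₂, L₁ ≥ 1). Let p₀ : ℝ^k → ℝ be a strictly positive, measurable prior density, and suppose the normalizing constants Z = ∫ p₀(θ) exp(Σ_i ℓ(θ,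 x_i)) dθ and Z̃ = ∫ p₀(θ) exp(Σ_j n_j ℓ(θ, μ_j)) dθ are finite and positive. Let P be the probability measure on ℝ^k with density (1/Z) p₀(θ) exp(Σ_{i=1}^N ℓ(θ, x_i)) with respect to Lebesgue measure, and let P̃ be the probability measure with density (1/Z̃) p₀(θ) exp(Σ_{j=1}^c n_j ℓ(θ, μ_j)). Then the Kullback–Leibler divergence satisfies KL(P ‖ P̃) ≤ K₀ δ², where K₀ = 2 L₁L₂ N + N/γ. -/
open Finset MeasureTheory InnerProductSpace

lemma taylor_grad_bound {E : Type*} [NormedAddCommGroup E] [InnerProductSpace ℝ E] [CompleteSpace E]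
    (h : E → ℝ) (hd : Differentiable ℝ h) (C : ℝ) (hC0 : 0 ≤ C)
    (hC : ∀ u v : E, ‖gradient h u - gradient h v‖ ≤ C * ‖u - v‖)
    (u v : E) :
    |h u - h v - inner ℝ (gradient h v) (u - v)| ≤ C * ‖u - v‖ ^ 2 := by
  set φ : E → ℝ := fun w => h w - (toDual ℝ E (gradient h v)) w with hφ
  have hderiv : ∀ w ∈ segment ℝ v u,
      HasFDerivWithinAt φ (toDual ℝ E (gradient h w) - toDual ℝ E (gradient h v))
        (segment ℝ v u) w := by
    intro w _
    exact (((hd w).hasGradientAt.hasFDerivAt).sub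
      ((toDual ℝ E (gradient h v)).hasFDerivAt)).hasFDerivWithinAt
  have hbound : ∀ w ∈ segment ℝ v u,
      ‖toDual ℝ E (gradient h w) - toDual ℝ E (gradient h v)‖ ≤ C * ‖u - v‖ := by
    intro w hw
    rw [← map_sub, (toDual ℝ E).norm_map]
    obtain ⟨a, b, ha, hb, hab, rfl⟩ := hw
    have : a • v + b • u - v = b • (u - v) := by
      have : a = 1 - b := by linarith
      rw [this]; module
    calc ‖gradient h (a • v + b • u) - gradient h v‖
        ≤ C * ‖a • v + b • u - v‖ := hC _ _
      _ = C * (b * ‖u - v‖) := by rw [this, norm_smul, Real.norm_of_nonneg hb]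
      _ ≤ C * ‖u - v‖ := by
          have hb1 : b ≤ 1 := by linarith
          nlinarith [norm_nonneg (u - v), mul_nonneg hC0 (norm_nonneg (u - v))]
  have := (convex_segment v u).norm_image_sub_le_of_norm_hasFDerivWithin_le
    hderiv hbound (left_mem_segment ℝ v u) (right_mem_segment ℝ v u)
  have heq : φ u - φ v = h u - h v - inner ℝ (gradient h v) (u - v) := by
    simp only [hφ, toDual_apply_apply, inner_sub_right]; ring
  calc |h u - h v - inner ℝ (gradient h v) (u - v)| = ‖φ u - φ v‖ := by
        rw [heq, Real.norm_eq_abs]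
    _ ≤ C * ‖u - v‖ * ‖u - v‖ := this
    _ = C * ‖u - v‖ ^ 2 := by ring


/-- **Theorem 1 (main result).** The Kullback–Leibler divergence
`KL(P‖P̃) = ∫ p(θ|X) ln(p(θ|X)/p̃(θ|X)) dθ` between the exact posterior `P`, of
density `p(θ|X) = (1/Z) p₀(θ) exp(∑ᵢ ℓ(θ, xᵢ))`, and the approximate posterior `P̃`,
of density `p̃(θ|X) = (1/Z̃) p₀(θ) exp(∑ⱼ nⱼ ℓ(θ, μⱼ))` in which every data point is
replaced by the centroid of its cluster, is at most `K₀ δ²` with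
`K₀ = 2 L₁ L₂ N + N/γ`. -/
theorem klDiv_posterior_approx_le
    {d k c : ℕ} (hc : 0 < c) (N : ℕ) (n : Fin c → ℕ) (hn : ∀ j, 0 < n j)
    (hN : ∑ j, n j = N)
    (x : (j : Fin c) → Fin (n j) → EuclideanSpace ℝ (Fin d))
    (μ : Fin c → EuclideanSpace ℝ (Fin d))
    (hμ : ∀ j, μ j = ((n j : ℝ))⁻¹ • ∑ i, x j i)
    (δ : ℝ)
    (hδ : IsGreatest {r : ℝ | ∃ j i, r = ‖x j i - μ j‖} δ)
    (γ L₁ L₂ : ℝ) (hγ : 0 < γ) (hL₁ : 0 < L₁) (hL₂ : 0 < L₂) (hL₁1 : 1 ≤ L₁)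
    (ℓ : EuclideanSpace ℝ (Fin k) → EuclideanSpace ℝ (Fin d) → ℝ)
    (hdiff : ∀ θ, Differentiable ℝ (ℓ θ))
    (hLip : ∀ θ (u v : EuclideanSpace ℝ (Fin d)), |ℓ θ u - ℓ θ v| ≤ L₁ * ‖u - v‖)
    (hgradLip : ∀ θ (u v : EuclideanSpace ℝ (Fin d)),
      ‖gradient (ℓ θ) u - gradient (ℓ θ) v‖ ≤ L₂ * ‖u - v‖)
    (hgradLip' : ∀ θ (u v : EuclideanSpace ℝ (Fin d)),
      ‖gradient (ℓ θ) u - gradient (ℓ θ) v‖ ≤ (1 / γ) * ‖u - v‖)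
    (p₀ : EuclideanSpace ℝ (Fin k) → ℝ) (hp₀ : ∀ θ, 0 < p₀ θ)
    (hp₀meas : Measurable p₀)
    (Z Ztil : ℝ)
    (hZdef : Z = ∫ θ : EuclideanSpace ℝ (Fin k),
      p₀ θ * Real.exp (∑ j, ∑ i, ℓ θ (x j i)))
    (hZint : Integrable (fun θ : EuclideanSpace ℝ (Fin k) =>
      p₀ θ * Real.exp (∑ j, ∑ i, ℓ θ (x j i))))
    (hZpos : 0 < Z)
    (hZtdef : Ztil = ∫ θ : EuclideanSpace ℝ (Fin k),
      p₀ θ * Real.exp (∑ j, (n j : ℝ) * ℓ θ (μ j)))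
    (hZtint : Integrable (fun θ : EuclideanSpace ℝ (Fin k) =>
      p₀ θ * Real.exp (∑ j, (n j : ℝ) * ℓ θ (μ j))))
    (hZtpos : 0 < Ztil)
    -- the exact posterior density
    (p : EuclideanSpace ℝ (Fin k) → ℝ)
    (hp : p = fun θ => (1 / Z) * p₀ θ * Real.exp (∑ j, ∑ i, ℓ θ (x j i)))
    -- the approximate posterior density
    (ptil : EuclideanSpace ℝ (Fin k) → ℝ)
    (hptil : ptil = fun θ => (1 / Ztil) * p₀ θ * Real.exp (∑ j, (n j : ℝ) * ℓ θ (μ j))) :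
    -- `KL(P‖P̃) = ∫ p ln(p/p̃) ≤ K₀ δ²`
    ∫ θ : EuclideanSpace ℝ (Fin k), p θ * Real.log (p θ / ptil θ) ≤
      (2 * L₁ * L₂ * N + N / γ) * δ ^ 2 := by
  set f : EuclideanSpace ℝ (Fin k) → ℝ := fun θ => ∑ j, ∑ i, ℓ θ (x j i) with hf
  set g : EuclideanSpace ℝ (Fin k) → ℝ := fun θ => ∑ j, (n j : ℝ) * ℓ θ (μ j) with hg
  -- δ is nonnegative and bounds all cluster radii
  obtain ⟨⟨j₀, i₀, hδeq⟩, hub⟩ := hδ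
  have hδ0 : 0 ≤ δ := hδeq ▸ norm_nonneg _
  have hble : ∀ j i, ‖x j i - μ j‖ ≤ δ := fun j i => hub ⟨j, i, rfl⟩
  -- centroid property
  have hcent : ∀ j, ∑ i, (x j i - μ j) = 0 := by
    intro j
    have hnj : (n j : ℝ) ≠ 0 := Nat.cast_ne_zero.mpr (hn j).ne'
    have : ∑ i : Fin (n j), (x j i - μ j) = (∑ i, x j i) - (n j : ℝ) • μ j := by
      rw [Finset.sum_sub_distrib, Finset.sum_const, Finset.card_univ, Fintype.card_fin,
        ← Nat.cast_smul_eq_nsmul ℝ]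
    rw [this, hμ j, smul_inv_smul₀ hnj, sub_self]
  -- key pointwise bound
  have hkey : ∀ (C : ℝ), 0 ≤ C →
      (∀ θ (u v : EuclideanSpace ℝ (Fin d)),
        ‖gradient (ℓ θ) u - gradient (ℓ θ) v‖ ≤ C * ‖u - v‖) →
      ∀ θ, |f θ - g θ| ≤ (N : ℝ) * C * δ ^ 2 := by
    intro C hC0 hC θ
    have hsum : f θ - g θ = ∑ j, ∑ i,
        (ℓ θ (x j i) - ℓ θ (μ j) - inner ℝ (gradient (ℓ θ) (μ j)) (x j i - μ j)) := by
      rw [hf, hg, ← Finset.sum_sub_distrib]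
      refine Finset.sum_congr rfl fun j _ => ?_
      have hz : ∑ i, (inner ℝ (gradient (ℓ θ) (μ j)) (x j i - μ j) : ℝ) = 0 := by
        rw [← inner_sum, hcent j, inner_zero_right]
      rw [Finset.sum_sub_distrib, Finset.sum_sub_distrib, hz, sub_zero,
        Finset.sum_const, Finset.card_univ, Fintype.card_fin, nsmul_eq_mul]
    rw [hsum]
    calc |∑ j, ∑ i, (ℓ θ (x j i) - ℓ θ (μ j) -
            inner ℝ (gradient (ℓ θ) (μ j)) (x j i - μ j))|
        ≤ ∑ j, ∑ i, |ℓ θ (x j i) - ℓ θ (μ j) -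
            inner ℝ (gradient (ℓ θ) (μ j)) (x j i - μ j)| := by
          refine le_trans (Finset.abs_sum_le_sum_abs _ _) ?_
          exact Finset.sum_le_sum fun j _ => Finset.abs_sum_le_sum_abs _ _
      _ ≤ ∑ j, ∑ _i : Fin (n j), C * δ ^ 2 := by
          refine Finset.sum_le_sum fun j _ => Finset.sum_le_sum fun i _ => ?_
          refine le_trans (taylor_grad_bound (ℓ θ) (hdiff θ) C hC0 (hC θ) _ _) ?_
          have h1 : ‖x j i - μ j‖ ≤ δ := hble j i
          have h2 : ‖x j i - μ j‖ ^ 2 ≤ δ ^ 2 := by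
            nlinarith [norm_nonneg (x j i - μ j)]
          exact mul_le_mul_of_nonneg_left h2 hC0
      _ = (N : ℝ) * C * δ ^ 2 := by
          simp only [Finset.sum_const, Finset.card_univ, Fintype.card_fin, nsmul_eq_mul]
          rw [← Finset.sum_mul, ← Nat.cast_sum, hN]; ring
  have hbd₂ : ∀ θ, |f θ - g θ| ≤ (N : ℝ) * L₂ * δ ^ 2 := hkey L₂ hL₂.le hgradLip
  have hbdγ : ∀ θ, |f θ - g θ| ≤ (N : ℝ) * (1 / γ) * δ ^ 2 :=
    hkey (1 / γ) (by positivity) hgradLip'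
  -- measurability of f and g
  have hp₀ne : ∀ θ, p₀ θ ≠ 0 := fun θ => (hp₀ θ).ne'
  have hfm : AEMeasurable f := by
    have h1 : AEMeasurable (fun θ => p₀ θ * Real.exp (f θ)) :=
      hZint.aestronglyMeasurable.aemeasurable
    have h2 : AEMeasurable (fun θ => Real.exp (f θ)) := by
      have := h1.mul (hp₀meas.inv.aemeasurable)
      refine this.congr (Filter.Eventually.of_forall fun θ => ?_)
      simp only [Pi.mul_apply, Pi.inv_apply]
      rw [mul_comm (p₀ θ) (Real.exp (f θ)), mul_assoc, mul_inv_cancel₀ (hp₀ne θ), mul_one]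
    have := Real.measurable_log.comp_aemeasurable h2
    refine this.congr (Filter.Eventually.of_forall fun θ => ?_)
    simp [Real.log_exp]
  have hgm : AEMeasurable g := by
    have h1 : AEMeasurable (fun θ => p₀ θ * Real.exp (g θ)) :=
      hZtint.aestronglyMeasurable.aemeasurable
    have h2 : AEMeasurable (fun θ => Real.exp (g θ)) := by
      have := h1.mul (hp₀meas.inv.aemeasurable)
      refine this.congr (Filter.Eventually.of_forall fun θ => ?_)
      simp only [Pi.mul_apply, Pi.inv_apply]
      rw [mul_comm (p₀ θ) (Real.exp (g θ)), mul_assoc, mul_inv_cancel₀ (hp₀ne θ), mul_one]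
    have := Real.measurable_log.comp_aemeasurable h2
    refine this.congr (Filter.Eventually.of_forall fun θ => ?_)
    simp [Real.log_exp]
  -- integrability and total mass of p
  have hpint : Integrable p := by
    rw [hp]; simpa [mul_assoc] using hZint.const_mul (1 / Z)
  have hppos : ∀ θ, 0 < p θ := by
    intro θ; rw [hp]
    exact mul_pos (mul_pos (one_div_pos.mpr hZpos) (hp₀ θ)) (Real.exp_pos _)
  have hpone : ∫ θ, p θ = 1 := by
    rw [hp]
    simp only [mul_assoc]
    rw [integral_const_mul, ← hZdef]
    field_simp
  -- integrability of p * (f - g)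
  have hpfg : Integrable (fun θ => p θ * (f θ - g θ)) := by
    refine Integrable.mono' (hpint.const_mul ((N : ℝ) * (1 / γ) * δ ^ 2))
      (hpint.aestronglyMeasurable.aemeasurable.mul (hfm.sub hgm)).aestronglyMeasurable
      (Filter.Eventually.of_forall fun θ => ?_)
    rw [Real.norm_eq_abs, abs_mul, abs_of_pos (hppos θ)]
    calc p θ * |f θ - g θ| ≤ p θ * ((N : ℝ) * (1 / γ) * δ ^ 2) :=
          mul_le_mul_of_nonneg_left (hbdγ θ) (hppos θ).le
      _ = (N : ℝ) * (1 / γ) * δ ^ 2 * p θ := by ring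
  -- bound on log(Ztil/Z)
  have hlogZ : Real.log Ztil - Real.log Z ≤ (N : ℝ) * L₂ * δ ^ 2 := by
    have hZle : Ztil ≤ Real.exp ((N : ℝ) * L₂ * δ ^ 2) * Z := by
      rw [hZtdef, hZdef, ← integral_const_mul]
      refine integral_mono hZtint (hZint.const_mul _) fun θ => ?_
      have h1 : g θ ≤ f θ + (N : ℝ) * L₂ * δ ^ 2 := by
        have := hbd₂ θ; rw [abs_le] at this; linarith [this.1]
      calc p₀ θ * Real.exp (g θ)
          ≤ p₀ θ * Real.exp (f θ + (N : ℝ) * L₂ * δ ^ 2) :=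
            mul_le_mul_of_nonneg_left (Real.exp_le_exp.mpr h1) (hp₀ θ).le
        _ = Real.exp ((N : ℝ) * L₂ * δ ^ 2) * (p₀ θ * Real.exp (f θ)) := by
            rw [Real.exp_add]; ring
    calc Real.log Ztil - Real.log Z
        ≤ Real.log (Real.exp ((N : ℝ) * L₂ * δ ^ 2) * Z) - Real.log Z := by
          have := Real.log_le_log hZtpos hZle
          linarith
      _ = (N : ℝ) * L₂ * δ ^ 2 := by
          rw [Real.log_mul (Real.exp_ne_zero _) hZpos.ne', Real.log_exp]; ring
  -- pointwise rewriting of the integrand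
  have hrw : ∀ θ, p θ * Real.log (p θ / ptil θ) =
      (Real.log Ztil - Real.log Z) * p θ + p θ * (f θ - g θ) := by
    intro θ
    have hratio : p θ / ptil θ = Ztil / Z * Real.exp (f θ - g θ) := by
      rw [hp, hptil, Real.exp_sub]
      have := hp₀ne θ
      have h1 : Real.exp (g θ) ≠ 0 := Real.exp_ne_zero _
      field_simp
      ring
    rw [hratio, Real.log_mul (by positivity) (Real.exp_ne_zero _),
      Real.log_div hZtpos.ne' hZpos.ne', Real.log_exp]
    ring
  calc ∫ θ, p θ * Real.log (p θ / ptil θ)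
      = ∫ θ, ((Real.log Ztil - Real.log Z) * p θ + p θ * (f θ - g θ)) := by
        exact integral_congr_ae (Filter.Eventually.of_forall hrw)
    _ = (Real.log Ztil - Real.log Z) * (∫ θ, p θ) + ∫ θ, p θ * (f θ - g θ) := by
        rw [integral_add (hpint.const_mul _) hpfg, integral_const_mul]
    _ = (Real.log Ztil - Real.log Z) + ∫ θ, p θ * (f θ - g θ) := by
        rw [hpone]; ring
    _ ≤ (N : ℝ) * L₂ * δ ^ 2 + (N : ℝ) * (1 / γ) * δ ^ 2 := by
        have h2 : ∫ θ, p θ * (f θ - g θ) ≤ (N : ℝ) * (1 / γ) * δ ^ 2 := by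
          calc ∫ θ, p θ * (f θ - g θ)
              ≤ ∫ θ, ((N : ℝ) * (1 / γ) * δ ^ 2) * p θ := by
                refine integral_mono hpfg (hpint.const_mul _) fun θ => ?_
                have := hbdγ θ; rw [abs_le] at this
                have := mul_le_mul_of_nonneg_left this.2 (hppos θ).le
                calc p θ * (f θ - g θ) ≤ p θ * ((N : ℝ) * (1 / γ) * δ ^ 2) := this
                  _ = ((N : ℝ) * (1 / γ) * δ ^ 2) * p θ := by ring
            _ = (N : ℝ) * (1 / γ) * δ ^ 2 := by rw [integral_const_mul, hpone, mul_one]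
        linarith [hlogZ]
    _ ≤ (2 * L₁ * L₂ * N + N / γ) * δ ^ 2 := by
        have hδ2 : 0 ≤ δ ^ 2 := sq_nonneg δ
        have hN0 : (0 : ℝ) ≤ N := Nat.cast_nonneg N
        have h1 : (N : ℝ) * L₂ * δ ^ 2 ≤ 2 * L₁ * L₂ * N * δ ^ 2 := by
          nlinarith [mul_nonneg (mul_nonneg hN0 hL₂.le) hδ2]
        have h2 : (N : ℝ) * (1 / γ) * δ ^ 2 = N / γ * δ ^ 2 := by ring
        linarith
end
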